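/- Let κ be a regular cardinal and μ a (κ,κ⁺)-cardinal. For every α < κ⁺, the μ-sequence (μ_ξ(α))_{ξ<ht(μ)} is a non-decreasing continuous (at limit stages, the term is the union of the preceding terms) sequence of subsets of α whose union equals α; it is a closed unbounded subset of [α]^{<κ}; and the height ht(μ) of (μ,⊂) equals κ. -/

import Mathlib

open Set Cardinal Ordinal

noncomputable section

/-- Lower a (small) ordinal of `Ordinal.{1}` to `Ordinal.{0}` (the inverse of `Ordinal.lift`
on its range). -/
noncomputable def olower (o : Ordinal.{1}) : Ordinal.{0} :=
  sInf {a : Ordinal.{0} | Ordinal.lift.{1} a = o}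

/-- The order type of a set of ordinals. -/
noncomputable def otp (A : Set Ordinal.{0}) : Ordinal.{0} :=
  olower (Ordinal.type (Subrel ((· < ·) : Ordinal → Ordinal → Prop) (· ∈ A)))

/-- The canonical order-preserving transfer map from a set of ordinals `X` to a set of
ordinals `Y` of the same order type: an element `a ∈ X` is sent to the unique element of `Y`
occupying the same position. -/
noncomputable def omap (X Y : Set Ordinal) (a : Ordinal) : Ordinal :=
  sInf {b | b ∈ Y ∧ otp (Y ∩ Set.Iio b) = otp (X ∩ Set.Iio a)}

/-- `IsStar X₁ X₂ X` says `X = X₁ * X₂`: `X₁` and `X₂` have the same order type,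
`X = X₁ ∪ X₂`, and `X₁ ∩ X₂ < X₁ \ X₂ < X₂ \ X₁` elementwise. -/
def IsStar (X₁ X₂ X : Set Ordinal) : Prop :=
  otp X₁ = otp X₂ ∧ X = X₁ ∪ X₂ ∧
  (∀ a ∈ X₁ ∩ X₂, ∀ b ∈ X₁ \ X₂, a < b) ∧
  (∀ b ∈ X₁ \ X₂, ∀ c ∈ X₂ \ X₁, b < c)

set_option linter.deprecated false in
/-- A `(κ,κ⁺)`-cardinal (a neat simplified `(κ,1)`-morass presented as a family of sets):
a family `μ ⊆ ℘_κ(κ⁺)` which is well-founded under strict inclusion, locally small,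
homogeneous, directed, locally almost directed, covers `κ⁺` and is neat. -/
structure TwoCardinal (κ : Cardinal.{0}) where
  mu : Set (Set Ordinal)
  mem_sub : ∀ X ∈ mu, X ⊆ Set.Iio (Order.succ κ).ord
  mem_small : ∀ X ∈ mu, (otp X).card < κ
  wf : WellFounded fun X Y : mu => (X : Set Ordinal) ⊂ (Y : Set Ordinal)
  locSmall : ∀ X : mu,
    #{Z : mu // (Z : Set Ordinal) ⊂ (X : Set Ordinal)} < Cardinal.lift.{1} κ
  homog : ∀ X Y : mu, (wf.apply X).rank = (wf.apply Y).rank →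
    otp (X : Set Ordinal) = otp (Y : Set Ordinal) ∧
    {Z | Z ∈ mu ∧ Z ⊂ (Y : Set Ordinal)} =
      (fun Z => omap (X : Set Ordinal) (Y : Set Ordinal) '' Z) ''
        {Z | Z ∈ mu ∧ Z ⊂ (X : Set Ordinal)}
  directed : ∀ X ∈ mu, ∀ Y ∈ mu, ∃ Z ∈ mu, X ⊆ Z ∧ Y ⊆ Z
  locAlmostDirected : ∀ X : mu,
    (∀ Z₁ ∈ mu, ∀ Z₂ ∈ mu, Z₁ ⊂ (X : Set Ordinal) → Z₂ ⊂ (X : Set Ordinal) →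
      ∃ Z ∈ mu, Z ⊂ (X : Set Ordinal) ∧ Z₁ ⊆ Z ∧ Z₂ ⊆ Z) ∨
    (∃ X₁ X₂ : mu, (wf.apply X₁).rank = (wf.apply X₂).rank ∧
      IsStar (X₁ : Set Ordinal) (X₂ : Set Ordinal) (X : Set Ordinal) ∧
      {Z | Z ∈ mu ∧ Z ⊂ (X : Set Ordinal)} =
        {Z | Z ∈ mu ∧ Z ⊂ (X₁ : Set Ordinal)} ∪ {Z | Z ∈ mu ∧ Z ⊂ (X₂ : Set Ordinal)} ∪
          {(X₁ : Set Ordinal), (X₂ : Set Ordinal)})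
  covers : ⋃₀ mu = Set.Iio (Order.succ κ).ord
  neat : ∀ X : mu, (wf.apply X).rank ≠ 0 →
    (X : Set Ordinal) = ⋃₀ {Z | Z ∈ mu ∧ Z ⊂ (X : Set Ordinal)}

namespace TwoCardinal

variable {κ : Cardinal} (M : TwoCardinal κ)

set_option linter.deprecated false in
/-- The rank of an element of `μ` in the well-founded order `(μ, ⊂)`. -/
noncomputable def rank (X : M.mu) : Ordinal := olower ((M.wf.apply X).rank)

/-- The height of the well-founded order `(μ, ⊂)`. -/
noncomputable def ht : Ordinal := sSup (Set.range fun X : M.mu => M.rank X + 1)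

/-- The term `μ_ξ(α)` of the μ-sequence at `α`: equal to `X ∩ α` for any `X ∈ μ` of
rank `ξ` containing `α` (this is independent of the choice of `X`). -/
noncomputable def seq (α ξ : Ordinal) : Set Ordinal :=
  ⋃₀ {S | ∃ X : M.mu, M.rank X = ξ ∧ α ∈ (X : Set Ordinal) ∧
    S = (X : Set Ordinal) ∩ Set.Iio α}

/-- The μ-coloring `m(α,β) = min{rank X : α, β ∈ X ∈ μ}`. -/
noncomputable def mcol (a b : Ordinal) : Ordinal :=
  sInf {ξ | ∃ X : M.mu, M.rank X = ξ ∧ a ∈ (X : Set Ordinal) ∧ b ∈ (X : Set Ordinal)}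

end TwoCardinal

/-!
Everything rests on coherence: two elements of `μ` of the same rank that both contain `a` agree
below `a`. It is proved by induction on a common upper bound `W ∈ μ`. If the predecessors of `W`
are directed, pass to a smaller common upper bound. Otherwise `W = X₁ * X₂`, and the transfer map
`X₁ → X₂` fixes `X₁ ∩ X₂` (an initial segment of both) and is a rank-preserving bijection between
the predecessors of `X₁` and those of `X₂`; it carries the case `X ⊆ X₁`, `Y ⊆ X₂` back inside
`X₁` without changing `Y` below `a`.

By coherence `μ_ξ(α) = X ∩ α` for any `X ∋ α` of rank `ξ`, and neatness with local almost
directedness lets one descend from any element containing `α` to one of each smaller rank; this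
gives monotonicity, and continuity because an element of limit rank is the directed union of its
predecessors. Local smallness bounds all ranks by `κ`, and `ht(μ) < κ` is impossible since then
fewer than `κ` sets of size `< κ` would cover `κ`.
-/

section OrderType

theorem olower_lift (a : Ordinal.{0}) : olower (Ordinal.lift.{1} a) = a := by
  simp [olower, Ordinal.lift_inj]

theorem type_subrel_le_lift {A : Set Ordinal.{0}} {b : Ordinal.{0}} (h : A ⊆ Iio b) :
    type (Subrel ((· < ·) : Ordinal → Ordinal → Prop) (· ∈ A)) ≤ Ordinal.lift.{1} b := by
  rw [← typein_ordinal, ← type_subrel]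
  exact RelEmbedding.ordinal_type_le ⟨⟨inclusion h, inclusion_injective h⟩, Iff.rfl⟩

theorem lift_otp {A : Set Ordinal.{0}} (hA : BddAbove A) :
    Ordinal.lift.{1} (otp A) = type (Subrel ((· < ·) : Ordinal → Ordinal → Prop) (· ∈ A)) := by
  obtain ⟨b, hb⟩ := hA
  have hA : A ⊆ Iio (Order.succ b) := fun a ha => Order.lt_succ_iff.2 (hb ha)
  obtain ⟨a, ha⟩ := Ordinal.mem_range_lift_of_le (type_subrel_le_lift hA)
  rw [otp, ← ha, olower_lift]

theorem otp_mono {A B : Set Ordinal.{0}} (hAB : A ⊆ B) (hB : BddAbove B) : otp A ≤ otp B := by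
  rw [← Ordinal.lift_le.{1}, lift_otp (hB.mono hAB), lift_otp hB]
  exact RelEmbedding.ordinal_type_le ⟨⟨inclusion hAB, inclusion_injective hAB⟩, Iff.rfl⟩

theorem mk_eq_lift_card_otp {A : Set Ordinal.{0}} (hA : BddAbove A) :
    #A = Cardinal.lift.{1} (otp A).card := by
  rw [Ordinal.lift_card, lift_otp hA, card_type]

theorem lift_otp_inter_Iio {A : Set Ordinal.{0}} {a : Ordinal} (ha : a ∈ A) :
    Ordinal.lift.{1} (otp (A ∩ Iio a)) =
      typein (Subrel ((· < ·) : Ordinal → Ordinal → Prop) (· ∈ A)) ⟨a, ha⟩ := by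
  rw [lift_otp (bddAbove_Iio.mono inter_subset_right), ← type_subrel]
  exact type_eq.2 ⟨⟨⟨fun x => ⟨⟨x.1, x.2.1⟩, x.2.2⟩, fun y => ⟨y.1.1, y.1.2, y.2⟩,
    fun _ => rfl, fun _ => rfl⟩, Iff.rfl⟩⟩

theorem otp_inter_Iio_lt {A : Set Ordinal.{0}} (hA : BddAbove A) {a : Ordinal} (ha : a ∈ A) :
    otp (A ∩ Iio a) < otp A := by
  rw [← Ordinal.lift_lt.{1}, lift_otp_inter_Iio ha, lift_otp hA]
  exact typein_lt_type _ _

theorem eq_of_otp_inter_Iio_eq {A : Set Ordinal.{0}} {a b : Ordinal} (ha : a ∈ A) (hb : b ∈ A)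
    (h : otp (A ∩ Iio a) = otp (A ∩ Iio b)) : a = b := by
  have h := congrArg Ordinal.lift.{1} h
  rw [lift_otp_inter_Iio ha, lift_otp_inter_Iio hb] at h
  exact congrArg Subtype.val (typein_injective _ h)

theorem exists_otp_inter_Iio_eq {A : Set Ordinal.{0}} (hA : BddAbove A) {o : Ordinal}
    (ho : o < otp A) : ∃ a ∈ A, otp (A ∩ Iio a) = o := by
  rw [← Ordinal.lift_lt.{1}, lift_otp hA] at ho
  obtain ⟨⟨a, ha⟩, e⟩ := typein_surj _ ho
  exact ⟨a, ha, Ordinal.lift_inj.1 (by rw [lift_otp_inter_Iio ha, e])⟩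

end OrderType

section OrderTypeTransfer

variable {X Y : Set Ordinal.{0}}

theorem omap_spec (hX : BddAbove X) (hY : BddAbove Y) (h : otp X = otp Y) {a : Ordinal}
    (ha : a ∈ X) : omap X Y a ∈ Y ∧ otp (Y ∩ Iio (omap X Y a)) = otp (X ∩ Iio a) := by
  obtain ⟨b, hb, hba⟩ := exists_otp_inter_Iio_eq hY (h ▸ otp_inter_Iio_lt hX ha)
  have hset : {c | c ∈ Y ∧ otp (Y ∩ Iio c) = otp (X ∩ Iio a)} = {b} :=
    Set.ext fun c => ⟨fun hc => eq_of_otp_inter_Iio_eq hc.1 hb (hc.2.trans hba.symm),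
      fun hc => hc ▸ ⟨hb, hba⟩⟩
  rw [omap, hset, csInf_singleton]
  exact ⟨hb, hba⟩

theorem injOn_omap (hX : BddAbove X) (hY : BddAbove Y) (h : otp X = otp Y) :
    InjOn (omap X Y) X := fun a ha a' ha' he =>
  eq_of_otp_inter_Iio_eq ha ha' <| by
    rw [← (omap_spec hX hY h ha).2, he, (omap_spec hX hY h ha').2]

theorem image_omap (hX : BddAbove X) (hY : BddAbove Y) (h : otp X = otp Y) :
    omap X Y '' X = Y := by
  refine Subset.antisymm (image_subset_iff.2 fun a ha => (omap_spec hX hY h ha).1) fun b hb => ?_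
  obtain ⟨a, ha, hab⟩ := exists_otp_inter_Iio_eq hX (h ▸ otp_inter_Iio_lt hY hb)
  have hspec := omap_spec hX hY h ha
  exact ⟨a, ha, eq_of_otp_inter_Iio_eq hspec.1 hb (hspec.2.trans hab)⟩

theorem omap_eq_self (hX : BddAbove X) (hY : BddAbove Y) (h : otp X = otp Y) {a : Ordinal}
    (haX : a ∈ X) (haY : a ∈ Y) (hseg : X ∩ Iio a = Y ∩ Iio a) : omap X Y a = a := by
  have hspec := omap_spec hX hY h haX
  exact eq_of_otp_inter_Iio_eq hspec.1 haY (by rw [hspec.2, hseg])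

end OrderTypeTransfer

theorem IsStar.mem_iff_mem_of_le {X₁ X₂ X : Set Ordinal} (h : IsStar X₁ X₂ X)
    (hX₁X₂ : ¬ X₁ ⊆ X₂) {a c : Ordinal} (ha₁ : a ∈ X₁) (ha₂ : a ∈ X₂) (hca : c ≤ a) :
    c ∈ X₁ ↔ c ∈ X₂ := by
  obtain ⟨-, -, hlt₁, hlt₂⟩ := h
  refine ⟨fun hc₁ => ?_, fun hc₂ => ?_⟩ <;> by_contra hc
  · exact (hlt₁ a ⟨ha₁, ha₂⟩ c ⟨hc₁, hc⟩).not_ge hca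
  · obtain ⟨b, hb₁, hb₂⟩ := not_subset.1 hX₁X₂
    exact ((hlt₁ a ⟨ha₁, ha₂⟩ b ⟨hb₁, hb₂⟩).trans (hlt₂ b ⟨hb₁, hb₂⟩ c ⟨hc₂, hc⟩)).not_ge hca

theorem mem_image_iff_of_eq_self_of_le {α : Type*} [Preorder α] {f : α → α} {A B Z : Set α}
    {a c : α} (hf : InjOn f A) (hZA : Z ⊆ A) (hZB : f '' Z ⊆ B)
    (hBA : ∀ c ≤ a, c ∈ B → c ∈ A) (hfix : ∀ c ∈ A, c ≤ a → f c = c) (hca : c ≤ a) :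
    c ∈ f '' Z ↔ c ∈ Z := by
  refine ⟨fun ⟨z, hz, hzc⟩ => ?_, fun hc => ⟨c, hc, hfix c (hZA hc) hca⟩⟩
  have hcA := hBA c hca (hZB ⟨z, hz, hzc⟩)
  rwa [← hf (hZA hz) hcA (by rw [hzc, hfix c hcA hca])]

namespace TwoCardinal

variable {κ : Cardinal.{0}} {M : TwoCardinal κ}

theorem bddAbove_mu (X : M.mu) : BddAbove X.1 := bddAbove_Iio.mono (M.mem_sub X X.2)

theorem exists_mem {a : Ordinal} (ha : a < (Order.succ κ).ord) : ∃ X : M.mu, a ∈ X.1 := by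
  obtain ⟨X, hX, haX⟩ : a ∈ ⋃₀ M.mu := M.covers ▸ ha
  exact ⟨⟨X, hX⟩, haX⟩

theorem exists_superset (X Y : M.mu) : ∃ Z : M.mu, X.1 ⊆ Z.1 ∧ Y.1 ⊆ Z.1 := by
  obtain ⟨Z, hZ, hXZ, hYZ⟩ := M.directed X X.2 Y Y.2
  exact ⟨⟨Z, hZ⟩, hXZ, hYZ⟩

theorem exists_mem_mem {a b : Ordinal} (ha : a < (Order.succ κ).ord)
    (hb : b < (Order.succ κ).ord) : ∃ Z : M.mu, a ∈ Z.1 ∧ b ∈ Z.1 := by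
  obtain ⟨X, haX⟩ := exists_mem (M := M) ha
  obtain ⟨Y, hbY⟩ := exists_mem (M := M) hb
  obtain ⟨Z, hXZ, hYZ⟩ := exists_superset X Y
  exact ⟨Z, hXZ haX, hYZ hbY⟩

theorem wfRank_lt_lift_ord (hκ : κ.IsRegular) (X : M.mu) :
    (M.wf.apply X).rank < Ordinal.lift.{1} κ.ord := by
  refine M.wf.induction (C := fun X => (M.wf.apply X).rank < Ordinal.lift.{1} κ.ord) X
    fun X IH => ?_
  have hlim : Order.IsSuccLimit (Ordinal.lift.{1} κ.ord) := by
    rw [Cardinal.lift_ord]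
    exact isSuccLimit_ord hκ.lift.aleph0_le
  rw [Acc.rank_eq]
  refine Ordinal.iSup_lt_of_lt_cof ?_ fun Z => hlim.succ_lt (IH Z Z.2)
  rw [← Ordinal.lift_cof, hκ.cof_ord]
  exact M.locSmall X

theorem lift_rank (hκ : κ.IsRegular) (X : M.mu) :
    Ordinal.lift.{1} (M.rank X) = (M.wf.apply X).rank := by
  obtain ⟨a, ha⟩ := Ordinal.mem_range_lift_of_le (wfRank_lt_lift_ord hκ X).le
  rw [rank, ← ha, olower_lift]

theorem rank_eq_rank_iff (hκ : κ.IsRegular) {X Y : M.mu} :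
    M.rank X = M.rank Y ↔ (M.wf.apply X).rank = (M.wf.apply Y).rank := by
  rw [← lift_rank hκ, ← lift_rank hκ, Ordinal.lift_inj]

theorem rank_lt_ord (hκ : κ.IsRegular) (X : M.mu) : M.rank X < κ.ord := by
  rw [← Ordinal.lift_lt.{1}, lift_rank hκ]
  exact wfRank_lt_lift_ord hκ X

theorem rank_lt_of_ssubset (hκ : κ.IsRegular) {X Y : M.mu} (h : X.1 ⊂ Y.1) :
    M.rank X < M.rank Y := by
  rw [← Ordinal.lift_lt.{1}, lift_rank hκ, lift_rank hκ]
  exact Acc.rank_lt_of_rel (M.wf.apply Y) h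

theorem rank_le_of_subset (hκ : κ.IsRegular) {X Y : M.mu} (h : X.1 ⊆ Y.1) :
    M.rank X ≤ M.rank Y := by
  obtain h | h := h.eq_or_ssubset
  · rw [Subtype.ext h]
  · exact (rank_lt_of_ssubset hκ h).le

theorem eq_of_subset_of_rank_eq (hκ : κ.IsRegular) {X Y : M.mu} (h : X.1 ⊆ Y.1)
    (hr : M.rank X = M.rank Y) : X = Y :=
  Subtype.ext <| h.eq_or_ssubset.resolve_right fun h => (rank_lt_of_ssubset hκ h).ne hr

theorem rank_le_of_forall_ssubset (hκ : κ.IsRegular) {X : M.mu} {o : Ordinal}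
    (h : ∀ Z : M.mu, Z.1 ⊂ X.1 → M.rank Z < o) : M.rank X ≤ o := by
  rw [← Ordinal.lift_le.{1}, lift_rank hκ, Acc.rank_eq]
  refine Ordinal.iSup_le fun Z => Order.succ_le_of_lt ?_
  rw [← lift_rank hκ, Ordinal.lift_lt]
  exact h Z Z.2

theorem exists_ssubset_le_rank (hκ : κ.IsRegular) {X : M.mu} {o : Ordinal} (h : o < M.rank X) :
    ∃ Z : M.mu, Z.1 ⊂ X.1 ∧ o ≤ M.rank Z := by
  by_contra! hZ
  exact (rank_le_of_forall_ssubset hκ hZ).not_gt h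

theorem exists_ssubset_mem (hκ : κ.IsRegular) {X : M.mu} (hX : M.rank X ≠ 0) {a : Ordinal}
    (ha : a ∈ X.1) : ∃ Z : M.mu, Z.1 ⊂ X.1 ∧ a ∈ Z.1 := by
  rw [Ne, ← Ordinal.lift_inj.{1}, Ordinal.lift_zero, lift_rank hκ] at hX
  rw [M.neat X hX] at ha
  obtain ⟨Z, ⟨hZ, hZX⟩, haZ⟩ := ha
  exact ⟨⟨Z, hZ⟩, hZX, haZ⟩

theorem bddAbove_range_rank_add_one (hκ : κ.IsRegular) :
    BddAbove (range fun X : M.mu => M.rank X + 1) :=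
  ⟨κ.ord, forall_mem_range.2 fun X => Order.add_one_le_of_lt (rank_lt_ord hκ X)⟩

theorem rank_lt_ht (hκ : κ.IsRegular) (X : M.mu) : M.rank X < M.ht :=
  (Order.lt_add_one_iff.2 le_rfl).trans_le (le_ciSup (bddAbove_range_rank_add_one hκ) X)

theorem ht_le_ord (hκ : κ.IsRegular) : M.ht ≤ κ.ord :=
  ciSup_le' fun X => Order.add_one_le_of_lt (rank_lt_ord hκ X)

theorem exists_le_rank_of_lt_ht {o : Ordinal} (ho : o < M.ht) : ∃ X : M.mu, o ≤ M.rank X := by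
  obtain ⟨X, hX⟩ := exists_lt_of_lt_ciSup' ho
  exact ⟨X, Order.lt_add_one_iff.1 hX⟩

section Homogeneity

variable {X₁ X₂ : M.mu}

theorem otp_eq_of_rank_eq (hκ : κ.IsRegular) (hr : M.rank X₁ = M.rank X₂) :
    otp X₁.1 = otp X₂.1 :=
  (M.homog X₁ X₂ ((rank_eq_rank_iff hκ).1 hr)).1

theorem image_omap_self (hκ : κ.IsRegular) (hr : M.rank X₁ = M.rank X₂) :
    omap X₁ X₂ '' X₁.1 = X₂.1 :=
  image_omap (bddAbove_mu X₁) (bddAbove_mu X₂) (otp_eq_of_rank_eq hκ hr)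

theorem injOn_omap_self (hκ : κ.IsRegular) (hr : M.rank X₁ = M.rank X₂) :
    InjOn (omap X₁ X₂) X₁.1 :=
  injOn_omap (bddAbove_mu X₁) (bddAbove_mu X₂) (otp_eq_of_rank_eq hκ hr)

theorem image_omap_mem (hκ : κ.IsRegular) (hr : M.rank X₁ = M.rank X₂) (Z : M.mu)
    (hZ : Z.1 ⊆ X₁.1) : omap X₁ X₂ '' Z.1 ∈ M.mu := by
  obtain hZ | hZ := hZ.eq_or_ssubset
  · rw [hZ, image_omap_self hκ hr]
    exact X₂.2
  · have h : omap X₁ X₂ '' Z.1 ∈ {Z | Z ∈ M.mu ∧ Z ⊂ X₂.1} := by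
      rw [(M.homog X₁ X₂ ((rank_eq_rank_iff hκ).1 hr)).2]
      exact mem_image_of_mem _ ⟨Z.2, hZ⟩
    exact h.1

theorem exists_image_omap_eq (hκ : κ.IsRegular) (hr : M.rank X₁ = M.rank X₂) (Y : M.mu)
    (hY : Y.1 ⊆ X₂.1) : ∃ Z : M.mu, Z.1 ⊆ X₁.1 ∧ omap X₁ X₂ '' Z.1 = Y.1 := by
  obtain hY | hY := hY.eq_or_ssubset
  · exact ⟨X₁, subset_rfl, (image_omap_self hκ hr).trans hY.symm⟩
  · have h : Y.1 ∈ {Z | Z ∈ M.mu ∧ Z ⊂ X₂.1} := ⟨Y.2, hY⟩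
    rw [(M.homog X₁ X₂ ((rank_eq_rank_iff hκ).1 hr)).2] at h
    obtain ⟨Z, ⟨hZ, hZX₁⟩, hZY⟩ := h
    exact ⟨⟨Z, hZ⟩, hZX₁.subset, hZY⟩

theorem rank_image_omap (hκ : κ.IsRegular) (hr : M.rank X₁ = M.rank X₂) (Z Z' : M.mu)
    (hZ : Z.1 ⊆ X₁.1) (hZZ' : omap X₁ X₂ '' Z.1 = Z'.1) : M.rank Z' = M.rank Z := by
  have hinj := injOn_omap_self hκ hr
  induction Z using M.wf.induction generalizing Z' with
  | _ Z IH =>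
    refine le_antisymm (rank_le_of_forall_ssubset hκ fun W' hW' => ?_)
      (rank_le_of_forall_ssubset hκ fun W hW => ?_)
    · have hW'X₂ : W'.1 ⊆ X₂.1 :=
        hW'.subset.trans (hZZ' ▸ (image_mono hZ).trans (image_omap_self hκ hr).subset)
      obtain ⟨W, hW, hWW'⟩ := exists_image_omap_eq hκ hr W' hW'X₂
      have hWZ : W.1 ⊂ Z.1 := (hinj.image_ssubset_image_iff hW hZ).1 (hWW' ▸ hZZ' ▸ hW')
      rw [IH W hWZ W' hW hWW']
      exact rank_lt_of_ssubset hκ hWZ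
    · have hWX₁ := hW.subset.trans hZ
      rw [← IH W hW ⟨_, image_omap_mem hκ hr W hWX₁⟩ hWX₁ rfl]
      exact rank_lt_of_ssubset hκ (hZZ' ▸ (hinj.image_ssubset_image_iff hWX₁ hZ).2 hW)

end Homogeneity

theorem ssubset_directed_or_isStar (hκ : κ.IsRegular) (X : M.mu) :
    (∀ Z₁ Z₂ : M.mu, Z₁.1 ⊂ X.1 → Z₂.1 ⊂ X.1 → ∃ Z : M.mu, Z.1 ⊂ X.1 ∧ Z₁.1 ⊆ Z.1 ∧ Z₂.1 ⊆ Z.1) ∨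
    ∃ X₁ X₂ : M.mu, M.rank X₁ = M.rank X₂ ∧ IsStar X₁ X₂ X ∧
      ∀ Z : M.mu, Z.1 ⊂ X.1 ↔ Z.1 ⊆ X₁.1 ∨ Z.1 ⊆ X₂.1 := by
  obtain hdir | ⟨X₁, X₂, hr, hstar, hmu⟩ := M.locAlmostDirected X
  · refine Or.inl fun Z₁ Z₂ h₁ h₂ => ?_
    obtain ⟨Z, hZ, hZX, hZ₁, hZ₂⟩ := hdir Z₁ Z₁.2 Z₂ Z₂.2 h₁ h₂
    exact ⟨⟨Z, hZ⟩, hZX, hZ₁, hZ₂⟩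
  · refine Or.inr ⟨X₁, X₂, (rank_eq_rank_iff hκ).2 hr, hstar, fun Z => ?_⟩
    have h := Set.ext_iff.1 hmu Z.1
    simp only [mem_ofPred_eq, mem_union, mem_insert_iff, mem_singleton_iff, Z.2, true_and] at h
    rw [h, subset_iff_ssubset_or_eq, subset_iff_ssubset_or_eq]
    tauto

theorem rank_eq_succ_of_isStar (hκ : κ.IsRegular) {X X₁ X₂ : M.mu} (hr : M.rank X₁ = M.rank X₂)
    (hsub : ∀ Z : M.mu, Z.1 ⊂ X.1 ↔ Z.1 ⊆ X₁.1 ∨ Z.1 ⊆ X₂.1) :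
    M.rank X = Order.succ (M.rank X₁) := by
  refine le_antisymm (rank_le_of_forall_ssubset hκ fun Z hZ => Order.lt_succ_iff.2 ?_)
    (Order.succ_le_of_lt (rank_lt_of_ssubset hκ ((hsub X₁).2 (Or.inl subset_rfl))))
  obtain h | h := (hsub Z).1 hZ
  · exact rank_le_of_subset hκ h
  · exact hr ▸ rank_le_of_subset hκ h

theorem exists_subset_mem_rank_eq (hκ : κ.IsRegular) (X : M.mu) {a : Ordinal} (ha : a ∈ X.1)
    {o : Ordinal} (ho : o ≤ M.rank X) : ∃ Z : M.mu, Z.1 ⊆ X.1 ∧ a ∈ Z.1 ∧ M.rank Z = o := by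
  induction X using M.wf.induction with
  | _ X IH =>
    obtain rfl | hlt := ho.eq_or_lt
    · exact ⟨X, subset_rfl, ha, rfl⟩
    suffices ∃ Y : M.mu, Y.1 ⊂ X.1 ∧ a ∈ Y.1 ∧ o ≤ M.rank Y by
      obtain ⟨Y, hYX, haY, hoY⟩ := this
      obtain ⟨Z, hZY, haZ, hZ⟩ := IH Y hYX haY hoY
      exact ⟨Z, hZY.trans hYX.subset, haZ, hZ⟩
    obtain hdir | ⟨X₁, X₂, hr, hstar, hsub⟩ := ssubset_directed_or_isStar hκ X
    · obtain ⟨Z₁, hZ₁X, haZ₁⟩ := exists_ssubset_mem hκ hlt.ne_bot ha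
      obtain ⟨Z₂, hZ₂X, hoZ₂⟩ := exists_ssubset_le_rank hκ hlt
      obtain ⟨Z, hZX, hZ₁Z, hZ₂Z⟩ := hdir Z₁ Z₂ hZ₁X hZ₂X
      exact ⟨Z, hZX, hZ₁Z haZ₁, hoZ₂.trans (rank_le_of_subset hκ hZ₂Z)⟩
    · have ho₁ : o ≤ M.rank X₁ := Order.lt_succ_iff.1 (rank_eq_succ_of_isStar hκ hr hsub ▸ hlt)
      rw [hstar.2.1] at ha
      obtain ha | ha := ha
      · exact ⟨X₁, (hsub X₁).2 (Or.inl subset_rfl), ha, ho₁⟩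
      · exact ⟨X₂, (hsub X₂).2 (Or.inr subset_rfl), ha, hr ▸ ho₁⟩

def CoherentBelow (W : M.mu) : Prop :=
  ∀ X Y : M.mu, X.1 ⊆ W.1 → Y.1 ⊆ W.1 → M.rank X = M.rank Y →
    ∀ a ∈ X.1, a ∈ Y.1 → X.1 ∩ Iio a = Y.1 ∩ Iio a

theorem inter_Iio_eq_of_isStar (hκ : κ.IsRegular) {W X₁ X₂ : M.mu}
    (hr : M.rank X₁ = M.rank X₂) (hstar : IsStar X₁ X₂ W) (hX₂W : X₂.1 ⊂ W.1)
    (hcoh : CoherentBelow X₁) {X Y : M.mu} (hX : X.1 ⊆ X₁.1) (hY : Y.1 ⊆ X₂.1)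
    (hXY : M.rank X = M.rank Y) {a : Ordinal} (haX : a ∈ X.1) (haY : a ∈ Y.1) :
    X.1 ∩ Iio a = Y.1 ∩ Iio a := by
  have hX₁X₂ : ¬ X₁.1 ⊆ X₂.1 := fun h =>
    hX₂W.ne (hstar.2.1.trans (union_eq_right.2 h)).symm
  have hseg : ∀ c ≤ a, c ∈ X₁.1 ↔ c ∈ X₂.1 :=
    fun c => hstar.mem_iff_mem_of_le hX₁X₂ (hX haX) (hY haY)
  have hfix : ∀ c ∈ X₁.1, c ≤ a → omap X₁ X₂ c = c := fun c hc hca =>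
    omap_eq_self (bddAbove_mu X₁) (bddAbove_mu X₂) (otp_eq_of_rank_eq hκ hr) hc
      ((hseg c hca).1 hc) (Set.ext fun d => and_congr_left fun hdc => hseg d (hdc.le.trans hca))
  obtain ⟨Z, hZ, hZY⟩ := exists_image_omap_eq hκ hr Y hY
  have hmem : ∀ c ≤ a, c ∈ Y.1 ↔ c ∈ Z.1 := fun c hca => hZY ▸
    mem_image_iff_of_eq_self_of_le (injOn_omap_self hκ hr) hZ (hZY ▸ hY)
      (fun c hc => (hseg c hc).2) hfix hca
  calc X.1 ∩ Iio a = Z.1 ∩ Iio a :=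
        hcoh X Z hX hZ (hXY.trans (rank_image_omap hκ hr Z Y hZ hZY)) a haX
          ((hmem a le_rfl).1 haY)
    _ = Y.1 ∩ Iio a := Set.ext fun c => and_congr_left fun hca => (hmem c hca.le).symm

theorem coherentBelow (hκ : κ.IsRegular) (W : M.mu) : CoherentBelow W := by
  induction W using M.wf.induction with
  | _ W IH =>
    intro X Y hXW hYW hr a haX haY
    obtain hXW | hXW := hXW.eq_or_ssubset
    · obtain rfl : X = W := Subtype.ext hXW
      rw [eq_of_subset_of_rank_eq hκ hYW hr.symm]
    obtain hYW | hYW := hYW.eq_or_ssubset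
    · obtain rfl : Y = W := Subtype.ext hYW
      rw [eq_of_subset_of_rank_eq hκ hXW.subset hr]
    obtain hdir | ⟨X₁, X₂, hr₁₂, hstar, hsub⟩ := ssubset_directed_or_isStar hκ W
    · obtain ⟨Z, hZW, hXZ, hYZ⟩ := hdir X Y hXW hYW
      exact IH Z hZW X Y hXZ hYZ hr a haX haY
    have hX₁W := (hsub X₁).2 (Or.inl subset_rfl)
    have hX₂W := (hsub X₂).2 (Or.inr subset_rfl)
    obtain hX | hX := (hsub X).1 hXW <;> obtain hY | hY := (hsub Y).1 hYW
    · exact IH X₁ hX₁W X Y hX hY hr a haX haY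
    · exact inter_Iio_eq_of_isStar hκ hr₁₂ hstar hX₂W (IH X₁ hX₁W) hX hY hr haX haY
    · exact (inter_Iio_eq_of_isStar hκ hr₁₂ hstar hX₂W (IH X₁ hX₁W) hY hX hr.symm haY haX).symm
    · exact IH X₂ hX₂W X Y hX hY hr a haX haY

theorem inter_Iio_eq_of_rank_eq (hκ : κ.IsRegular) {X Y : M.mu} (hr : M.rank X = M.rank Y)
    {a : Ordinal} (haX : a ∈ X.1) (haY : a ∈ Y.1) : X.1 ∩ Iio a = Y.1 ∩ Iio a := by
  obtain ⟨W, hXW, hYW⟩ := exists_superset X Y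
  exact coherentBelow hκ W X Y hXW hYW hr a haX haY

section Sequence

variable {α : Ordinal}

theorem seq_subset_Iio (ξ : Ordinal) : M.seq α ξ ⊆ Iio α := by
  rintro β ⟨-, ⟨X, -, -, rfl⟩, hβ⟩
  exact hβ.2

theorem mem_seq_rank {Z : M.mu} {β : Ordinal} (hα : α ∈ Z.1) (hβ : β ∈ Z.1) (hβα : β < α) :
    β ∈ M.seq α (M.rank Z) :=
  ⟨Z.1 ∩ Iio α, ⟨Z, rfl, hα, rfl⟩, hβ, hβα⟩

theorem seq_rank_eq (hκ : κ.IsRegular) {X : M.mu} (hα : α ∈ X.1) :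
    M.seq α (M.rank X) = X.1 ∩ Iio α := by
  refine Subset.antisymm ?_ fun β hβ => mem_seq_rank hα hβ.1 hβ.2
  rintro β ⟨-, ⟨Y, hY, hαY, rfl⟩, hβ⟩
  rwa [← inter_Iio_eq_of_rank_eq hκ hY hαY hα]

theorem exists_mem_rank_eq (hκ : κ.IsRegular) (hα : α < (Order.succ κ).ord) {ξ : Ordinal}
    (hξ : ξ < M.ht) : ∃ X : M.mu, α ∈ X.1 ∧ M.rank X = ξ := by
  obtain ⟨Xα, hαXα⟩ := exists_mem (M := M) hα
  obtain ⟨Xξ, hξXξ⟩ := exists_le_rank_of_lt_ht hξ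
  obtain ⟨V, hXαV, hXξV⟩ := exists_superset Xα Xξ
  obtain ⟨X, -, hαX, hX⟩ :=
    exists_subset_mem_rank_eq hκ V (hXαV hαXα) (hξXξ.trans (rank_le_of_subset hκ hXξV))
  exact ⟨X, hαX, hX⟩

theorem seq_mono (hκ : κ.IsRegular) (hα : α < (Order.succ κ).ord) {ξ η : Ordinal} (hξη : ξ ≤ η)
    (hη : η < M.ht) : M.seq α ξ ⊆ M.seq α η := by
  obtain ⟨Z, hαZ, rfl⟩ := exists_mem_rank_eq hκ hα hη
  obtain ⟨Y, hYZ, hαY, rfl⟩ := exists_subset_mem_rank_eq hκ Z hαZ hξη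
  rw [seq_rank_eq hκ hαY, seq_rank_eq hκ hαZ]
  exact inter_subset_inter_left _ hYZ

theorem seq_eq_biUnion_of_isSuccLimit (hκ : κ.IsRegular) (hα : α < (Order.succ κ).ord)
    {δ : Ordinal} (hδ : δ < M.ht) (hlim : Order.IsSuccLimit δ) :
    M.seq α δ = ⋃ ξ ∈ Iio δ, M.seq α ξ := by
  refine Subset.antisymm (fun β hβ => ?_) (iUnion₂_subset fun ξ hξ => seq_mono hκ hα hξ.le hδ)
  obtain ⟨X, hαX, rfl⟩ := exists_mem_rank_eq hκ hα hδ
  rw [seq_rank_eq hκ hαX] at hβ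
  obtain hdir | ⟨X₁, X₂, hr, -, hsub⟩ := ssubset_directed_or_isStar hκ X
  · obtain ⟨Z₁, hZ₁X, hαZ₁⟩ := exists_ssubset_mem hκ hlim.ne_bot hαX
    obtain ⟨Z₂, hZ₂X, hβZ₂⟩ := exists_ssubset_mem hκ hlim.ne_bot hβ.1
    obtain ⟨Z, hZX, hZ₁Z, hZ₂Z⟩ := hdir Z₁ Z₂ hZ₁X hZ₂X
    exact mem_biUnion (rank_lt_of_ssubset hκ hZX) (mem_seq_rank (hZ₁Z hαZ₁) (hZ₂Z hβZ₂) hβ.2)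
  · exact absurd (rank_eq_succ_of_isStar hκ hr hsub) (hlim.isSuccPrelimit.succ_ne _).symm

theorem biUnion_seq_eq (hκ : κ.IsRegular) (hα : α < (Order.succ κ).ord) :
    ⋃ ξ ∈ Iio M.ht, M.seq α ξ = Iio α := by
  refine Subset.antisymm (iUnion₂_subset fun ξ _ => seq_subset_Iio ξ) fun β hβ => ?_
  obtain ⟨Z, hαZ, hβZ⟩ := exists_mem_mem (M := M) hα (lt_trans hβ hα)
  exact mem_biUnion (rank_lt_ht hκ Z) (mem_seq_rank hαZ hβZ hβ)

theorem card_otp_seq_lt (hκ : κ.IsRegular) (hα : α < (Order.succ κ).ord) {ξ : Ordinal}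
    (hξ : ξ < M.ht) : (otp (M.seq α ξ)).card < κ := by
  obtain ⟨X, hαX, rfl⟩ := exists_mem_rank_eq hκ hα hξ
  rw [seq_rank_eq hκ hαX]
  exact (card_le_card (otp_mono inter_subset_left (bddAbove_mu X))).trans_lt (M.mem_small X X.2)

end Sequence

theorem ht_eq_ord (hκ : κ.IsRegular) : M.ht = κ.ord := by
  refine (ht_le_ord hκ).antisymm (not_lt.1 fun hlt => ?_)
  have hκκ' : κ.ord < (Order.succ κ).ord := ord_lt_ord.2 (Order.lt_succ κ)
  have hsmall : #(Iio κ.ord) < Cardinal.lift.{1} κ := by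
    rw [← biUnion_seq_eq (M := M) hκ hκκ']
    refine (mk_biUnion_le _ _).trans_lt (mul_lt_of_lt hκ.lift.aleph0_le ?_ ?_)
    · rw [Cardinal.mk_Iio_ordinal]
      exact lift_lt.2 (lt_ord.1 hlt)
    · refine iSup_lt_of_lt_cof_ord ?_ fun ξ => ?_
      · rw [hκ.lift.cof_ord, Cardinal.mk_Iio_ordinal]
        exact lift_lt.2 (lt_ord.1 hlt)
      · rw [mk_eq_lift_card_otp (bddAbove_Iio.mono (seq_subset_Iio _))]
        exact lift_lt.2 (card_otp_seq_lt hκ hκκ' ξ.2)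
  rw [Cardinal.mk_Iio_ordinal, card_ord] at hsmall
  exact hsmall.false

theorem exists_subset_seq (hκ : κ.IsRegular) {α : Ordinal} (hα : α < (Order.succ κ).ord)
    {s : Set Ordinal} (hs : s ⊆ Iio α) (hcard : (otp s).card < κ) :
    ∃ ξ < M.ht, s ⊆ M.seq α ξ := by
  have hZ : ∀ b : s, ∃ Z : M.mu, α ∈ Z.1 ∧ b.1 ∈ Z.1 := fun b =>
    exists_mem_mem hα ((hs b.2).trans hα)
  choose Z hαZ hbZ using hZ
  have hlt : ⨆ b, M.rank (Z b) < M.ht := by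
    rw [ht_eq_ord hκ]
    refine Ordinal.lift_iSup_lt_of_lt_cof ?_ fun b => rank_lt_ord hκ _
    rw [← Ordinal.lift_cof, hκ.cof_ord, Cardinal.lift_uzero,
      mk_eq_lift_card_otp (bddAbove_Iio.mono hs)]
    exact lift_lt.2 hcard
  have hbdd : BddAbove (range fun b => M.rank (Z b)) :=
    ⟨κ.ord, forall_mem_range.2 fun b => (rank_lt_ord hκ _).le⟩
  exact ⟨_, hlt, fun b hb =>
    seq_mono hκ hα (le_ciSup hbdd ⟨b, hb⟩) hlt (mem_seq_rank (hαZ _) (hbZ _) (hs hb))⟩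

end TwoCardinal

/-- The μ-sequence at `α` is non-decreasing, continuous, covers `α`, is club in `[α]^{<κ}`,
and the height of `(μ,⊂)` is `κ`. -/
theorem museq_club (κ : Cardinal) (hκ : κ.IsRegular) (M : TwoCardinal κ)
    (α : Ordinal) (hα : α < (Order.succ κ).ord) :
    (∀ ξ η : Ordinal, ξ ≤ η → η < M.ht → M.seq α ξ ⊆ M.seq α η) ∧
    (∀ δ : Ordinal, δ < M.ht → Order.IsSuccLimit δ → M.seq α δ = ⋃ ξ ∈ Set.Iio δ, M.seq α ξ) ∧
    (⋃ ξ ∈ Set.Iio M.ht, M.seq α ξ) = Set.Iio α ∧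
    (∀ ξ, ξ < M.ht → M.seq α ξ ⊆ Set.Iio α ∧ (otp (M.seq α ξ)).card < κ) ∧
    (∀ s : Set Ordinal, s ⊆ Set.Iio α → (otp s).card < κ → ∃ ξ < M.ht, s ⊆ M.seq α ξ) ∧
    M.ht = κ.ord :=
  ⟨fun _ _ => TwoCardinal.seq_mono hκ hα,
    fun _ => TwoCardinal.seq_eq_biUnion_of_isSuccLimit hκ hα,
    TwoCardinal.biUnion_seq_eq hκ hα,
    fun ξ hξ => ⟨TwoCardinal.seq_subset_Iio ξ, TwoCardinal.card_otp_seq_lt hκ hα hξ⟩,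
    fun _ => TwoCardinal.exists_subset_seq hκ hα,
    TwoCardinal.ht_eq_ord hκ⟩
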